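/- arXiv:2308.07315 — 4 statements merged into one kernel-verified Lean document; each statement's English description precedes it below -/
import Mathlib

section
/- For all positive real numbers λ₁, …, λ₇ there exists a linear automorphism g of ℝ⁷ with determinant det g = (λ₁λ₂λ₃λ₄λ₅λ₆λ₇)^{1/3} > 0 such that λ₁φ₁ + λ₂φ₂ + λ₃φ₃ + λ₄φ₄ + λ₅φ₅ + λ₆φ₆ + λ₇φ₇ = φ₀ ∘ g. (In particular, every positive linear combination of φ₁, …, φ₇ lies in the orbit of the standard G₂ 3-form φ₀ under orientation-preserving linear automorphisms of ℝ⁷.) -/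
open Matrix

/-- The alternating 3-form `θ^{ijk}` on `ℝ⁷` (indices 0-based):
`θ^{ijk}(v₁,v₂,v₃)` is the determinant of the 3×3 matrix whose `(a,b)` entry is the
`(i,j,k)_a`-th coordinate of `v_b`. -/
noncomputable def theta (i j k : Fin 7) (v₁ v₂ v₃ : Fin 7 → ℝ) : ℝ :=
  Matrix.det !![v₁ i, v₂ i, v₃ i; v₁ j, v₂ j, v₃ j; v₁ k, v₂ k, v₃ k]

noncomputable def phi1 : (Fin 7 → ℝ) → (Fin 7 → ℝ) → (Fin 7 → ℝ) → ℝ := theta 0 1 2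
noncomputable def phi2 : (Fin 7 → ℝ) → (Fin 7 → ℝ) → (Fin 7 → ℝ) → ℝ := theta 0 3 4
noncomputable def phi3 : (Fin 7 → ℝ) → (Fin 7 → ℝ) → (Fin 7 → ℝ) → ℝ := theta 0 5 6
noncomputable def phi4 : (Fin 7 → ℝ) → (Fin 7 → ℝ) → (Fin 7 → ℝ) → ℝ := theta 1 3 5
noncomputable def phi5 : (Fin 7 → ℝ) → (Fin 7 → ℝ) → (Fin 7 → ℝ) → ℝ :=
  fun v₁ v₂ v₃ => -theta 1 4 6 v₁ v₂ v₃
noncomputable def phi6 : (Fin 7 → ℝ) → (Fin 7 → ℝ) → (Fin 7 → ℝ) → ℝ :=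
  fun v₁ v₂ v₃ => -theta 2 3 6 v₁ v₂ v₃
noncomputable def phi7 : (Fin 7 → ℝ) → (Fin 7 → ℝ) → (Fin 7 → ℝ) → ℝ :=
  fun v₁ v₂ v₃ => -theta 2 4 5 v₁ v₂ v₃

/-- The standard G₂ 3-form `φ₀` on `ℝ⁷`. -/
noncomputable def phi0 (v₁ v₂ v₃ : Fin 7 → ℝ) : ℝ :=
  phi1 v₁ v₂ v₃ + phi2 v₁ v₂ v₃ + phi3 v₁ v₂ v₃ + phi4 v₁ v₂ v₃ +
    phi5 v₁ v₂ v₃ + phi6 v₁ v₂ v₃ + phi7 v₁ v₂ v₃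

/-- For all positive `λ₁,…,λ₇` there is a linear automorphism `g` of `ℝ⁷`, of determinant
`(λ₁⋯λ₇)^{1/3} > 0`, with `∑ λᵢ φᵢ = φ₀ ∘ g`. -/
theorem statement0 (lam : Fin 7 → ℝ) (hlam : ∀ i, 0 < lam i) :
    ∃ g : (Fin 7 → ℝ) ≃ₗ[ℝ] (Fin 7 → ℝ),
      LinearMap.det (g.toLinearMap) =
        (lam 0 * lam 1 * lam 2 * lam 3 * lam 4 * lam 5 * lam 6) ^ ((1 : ℝ) / 3) ∧
      0 < LinearMap.det (g.toLinearMap) ∧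
      ∀ v₁ v₂ v₃ : Fin 7 → ℝ,
        lam 0 * phi1 v₁ v₂ v₃ + lam 1 * phi2 v₁ v₂ v₃ + lam 2 * phi3 v₁ v₂ v₃ +
          lam 3 * phi4 v₁ v₂ v₃ + lam 4 * phi5 v₁ v₂ v₃ + lam 5 * phi6 v₁ v₂ v₃ +
          lam 6 * phi7 v₁ v₂ v₃ = phi0 (g v₁) (g v₂) (g v₃) := by
  have hlog : ∀ m, Real.exp (Real.log (lam m)) = lam m := fun m => Real.exp_log (hlam m)
  set l : Fin 7 → ℝ := fun m => Real.log (lam m) with hldef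
  set S : ℝ := l 0 + l 1 + l 2 + l 3 + l 4 + l 5 + l 6 with hS
  set x : Fin 7 → ℝ := ![(l 0 + l 1 + l 2)/2 - S/6, (l 0 + l 3 + l 4)/2 - S/6,
    (l 0 + l 5 + l 6)/2 - S/6, (l 1 + l 3 + l 5)/2 - S/6, (l 1 + l 4 + l 6)/2 - S/6,
    (l 2 + l 3 + l 6)/2 - S/6, (l 2 + l 4 + l 5)/2 - S/6] with hx
  set d : Fin 7 → ℝ := fun i => Real.exp (x i) with hd
  have key : ∀ (i j k m : Fin 7), x i + x j + x k = l m → d i * d j * d k = lam m := by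
    intro i j k m h
    rw [hd]
    simp only
    rw [← Real.exp_add, ← Real.exp_add, h, hldef]
    exact hlog m
  have hx0 : x 0 = (l 0 + l 1 + l 2)/2 - S/6 := rfl
  have hx1 : x 1 = (l 0 + l 3 + l 4)/2 - S/6 := rfl
  have hx2 : x 2 = (l 0 + l 5 + l 6)/2 - S/6 := rfl
  have hx3 : x 3 = (l 1 + l 3 + l 5)/2 - S/6 := rfl
  have hx4 : x 4 = (l 1 + l 4 + l 6)/2 - S/6 := rfl
  have hx5 : x 5 = (l 2 + l 3 + l 6)/2 - S/6 := rfl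
  have hx6 : x 6 = (l 2 + l 4 + l 5)/2 - S/6 := rfl
  have h0 : d 0 * d 1 * d 2 = lam 0 := key 0 1 2 0 (by rw [hx0, hx1, hx2, hS]; ring)
  have h1 : d 0 * d 3 * d 4 = lam 1 := key 0 3 4 1 (by rw [hx0, hx3, hx4, hS]; ring)
  have h2 : d 0 * d 5 * d 6 = lam 2 := key 0 5 6 2 (by rw [hx0, hx5, hx6, hS]; ring)
  have h3 : d 1 * d 3 * d 5 = lam 3 := key 1 3 5 3 (by rw [hx1, hx3, hx5, hS]; ring)
  have h4 : d 1 * d 4 * d 6 = lam 4 := key 1 4 6 4 (by rw [hx1, hx4, hx6, hS]; ring)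
  have h5 : d 2 * d 3 * d 6 = lam 5 := key 2 3 6 5 (by rw [hx2, hx3, hx6, hS]; ring)
  have h6 : d 2 * d 4 * d 5 = lam 6 := key 2 4 5 6 (by rw [hx2, hx4, hx5, hS]; ring)
  have hdne : ∀ i, d i ≠ 0 := fun i => (Real.exp_pos _).ne'
  let g : (Fin 7 → ℝ) ≃ₗ[ℝ] (Fin 7 → ℝ) :=
  { toFun := fun v i => d i * v i
    invFun := fun v i => (d i)⁻¹ * v i
    map_add' := fun u v => by funext i; simp [mul_add]
    map_smul' := fun c v => by funext i; simp [smul_eq_mul]; ring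
    left_inv := fun v => by
      funext i
      simp only
      rw [← mul_assoc, inv_mul_cancel₀ (hdne i), one_mul]
    right_inv := fun v => by
      funext i
      simp only
      rw [← mul_assoc, mul_inv_cancel₀ (hdne i), one_mul] }
  have hg : ∀ (v : Fin 7 → ℝ) i, g v i = d i * v i := fun _ _ => rfl
  have hdet : LinearMap.det g.toLinearMap = Real.exp (S / 3) := by
    have hmat : g.toLinearMap = Matrix.toLin' (Matrix.diagonal d) := by
      apply LinearMap.ext; intro v
      funext i
      rw [Matrix.toLin'_apply, Matrix.mulVec_diagonal]
      rfl
    rw [hmat, LinearMap.det_toLin', Matrix.det_diagonal, Fin.prod_univ_seven]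
    rw [hd]
    simp only
    rw [← Real.exp_add, ← Real.exp_add, ← Real.exp_add, ← Real.exp_add, ← Real.exp_add,
      ← Real.exp_add]
    congr 1
    rw [hx0, hx1, hx2, hx3, hx4, hx5, hx6, hS]; ring
  have hP : (0:ℝ) < lam 0 * lam 1 * lam 2 * lam 3 * lam 4 * lam 5 * lam 6 :=
    mul_pos (mul_pos (mul_pos (mul_pos (mul_pos (mul_pos (hlam 0) (hlam 1)) (hlam 2))
      (hlam 3)) (hlam 4)) (hlam 5)) (hlam 6)
  have hrpow : (lam 0 * lam 1 * lam 2 * lam 3 * lam 4 * lam 5 * lam 6) ^ ((1:ℝ)/3)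
      = Real.exp (S / 3) := by
    rw [Real.rpow_def_of_pos hP]
    congr 1
    have hne : ∀ m : Fin 7, lam m ≠ 0 := fun m => (hlam m).ne'
    have p2 : lam 0 * lam 1 ≠ 0 := (mul_pos (hlam 0) (hlam 1)).ne'
    have p3 : lam 0 * lam 1 * lam 2 ≠ 0 := (mul_pos (mul_pos (hlam 0) (hlam 1)) (hlam 2)).ne'
    have p4 : lam 0 * lam 1 * lam 2 * lam 3 ≠ 0 :=
      (mul_pos (mul_pos (mul_pos (hlam 0) (hlam 1)) (hlam 2)) (hlam 3)).ne'
    have p5 : lam 0 * lam 1 * lam 2 * lam 3 * lam 4 ≠ 0 :=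
      (mul_pos (mul_pos (mul_pos (mul_pos (hlam 0) (hlam 1)) (hlam 2)) (hlam 3)) (hlam 4)).ne'
    have p6 : lam 0 * lam 1 * lam 2 * lam 3 * lam 4 * lam 5 ≠ 0 :=
      (mul_pos (mul_pos (mul_pos (mul_pos (mul_pos (hlam 0) (hlam 1)) (hlam 2)) (hlam 3))
        (hlam 4)) (hlam 5)).ne'
    rw [Real.log_mul p6 (hne 6), Real.log_mul p5 (hne 5),
      Real.log_mul p4 (hne 4), Real.log_mul p3 (hne 3),
      Real.log_mul p2 (hne 2), Real.log_mul (hne 0) (hne 1), hS, hldef]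
    ring
  refine ⟨g, ?_, ?_, ?_⟩
  · rw [hdet, hrpow]
  · rw [hdet]; exact Real.exp_pos _
  · intro v₁ v₂ v₃
    rw [← h0, ← h1, ← h2, ← h3, ← h4, ← h5, ← h6]
    simp only [phi0, phi1, phi2, phi3, phi4, phi5, phi6, phi7, theta, hg,
      Matrix.det_fin_three, Matrix.cons_val', Matrix.cons_val_zero, Matrix.cons_val_one,
      Matrix.head_cons, Matrix.empty_val', Matrix.cons_val_fin_one, Matrix.head_fin_const,
      Matrix.cons_val_two, Matrix.tail_cons, Matrix.of_apply]
    ring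
end

section
/- For all positive real numbers λ₁, …, λ₇ there exist unique positive real numbers μ₁, …, μ₇ satisfying the seven equations μ₁μ₂μ₃ = λ₁, μ₁μ₄μ₅ = λ₂, μ₁μ₆μ₇ = λ₃, μ₂μ₄μ₆ = λ₄, μ₂μ₅μ₇ = λ₅, μ₃μ₄μ₇ = λ₆, μ₃μ₅μ₆ = λ₇; moreover any such solution satisfies λ₁λ₂λ₃λ₄λ₅λ₆λ₇ = (μ₁μ₂μ₃μ₄μ₅μ₆μ₇)³. -/
noncomputable def fanoSol (l1 l2 l3 l4 l5 l6 l7 : ℝ) : Fin 7 → ℝ :=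
  let a1 := Real.log l1; let a2 := Real.log l2; let a3 := Real.log l3
  let a4 := Real.log l4; let a5 := Real.log l5; let a6 := Real.log l6
  let a7 := Real.log l7
  let L := (a1 + a2 + a3 + a4 + a5 + a6 + a7) / 3
  ![Real.exp ((a1 + a2 + a3 - L) / 2),
    Real.exp ((a1 + a4 + a5 - L) / 2),
    Real.exp ((a1 + a6 + a7 - L) / 2),
    Real.exp ((a2 + a4 + a6 - L) / 2),
    Real.exp ((a2 + a5 + a7 - L) / 2),
    Real.exp ((a3 + a4 + a7 - L) / 2),
    Real.exp ((a3 + a5 + a6 - L) / 2)]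

lemma fano_uniq (l1 l2 l3 l4 l5 l6 l7 : ℝ) (m n : Fin 7 → ℝ)
    (hm : ∀ i, 0 < m i) (hn : ∀ i, 0 < n i)
    (e1 : m 0 * m 1 * m 2 = l1) (e2 : m 0 * m 3 * m 4 = l2)
    (e3 : m 0 * m 5 * m 6 = l3) (e4 : m 1 * m 3 * m 5 = l4)
    (e5 : m 1 * m 4 * m 6 = l5) (e6 : m 2 * m 3 * m 6 = l6)
    (e7 : m 2 * m 4 * m 5 = l7)
    (f1 : n 0 * n 1 * n 2 = l1) (f2 : n 0 * n 3 * n 4 = l2)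
    (f3 : n 0 * n 5 * n 6 = l3) (f4 : n 1 * n 3 * n 5 = l4)
    (f5 : n 1 * n 4 * n 6 = l5) (f6 : n 2 * n 3 * n 6 = l6)
    (f7 : n 2 * n 4 * n 5 = l7) : m = n := by
  set P := m 0 * m 1 * m 2 * m 3 * m 4 * m 5 * m 6 with hP
  set Q := n 0 * n 1 * n 2 * n 3 * n 4 * n 5 * n 6 with hQ
  have hPpos : 0 < P := by have := hm 0; have := hm 1; have := hm 2; have := hm 3
                           have := hm 4; have := hm 5; have := hm 6; positivity
  have hQpos : 0 < Q := by have := hn 0; have := hn 1; have := hn 2; have := hn 3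
                           have := hn 4; have := hn 5; have := hn 6; positivity
  have hcube : P ^ 3 = Q ^ 3 := by
    have hA : P ^ 3 = l1 * l2 * l3 * l4 * l5 * l6 * l7 := by
      rw [← e1, ← e2, ← e3, ← e4, ← e5, ← e6, ← e7, hP]; ring
    have hB : Q ^ 3 = l1 * l2 * l3 * l4 * l5 * l6 * l7 := by
      rw [← f1, ← f2, ← f3, ← f4, ← f5, ← f6, ← f7, hQ]; ring
    rw [hA, hB]
  have hPQ : P = Q := by
    rcases lt_trichotomy P Q with h'|h'|h'
    · exact absurd hcube (ne_of_lt (pow_lt_pow_left₀ h' hPpos.le (by norm_num)))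
    · exact h'
    · exact absurd hcube (ne_of_gt (pow_lt_pow_left₀ h' hQpos.le (by norm_num)))
  have key : ∀ i : Fin 7, m i ^ 2 * P = n i ^ 2 * Q → m i = n i := by
    intro i h
    rw [hPQ] at h
    have h2 : m i ^ 2 = n i ^ 2 := mul_right_cancel₀ (ne_of_gt hQpos) h
    nlinarith [hm i, hn i]
  funext i
  fin_cases i
  · exact key 0 (by rw [show m 0 ^ 2 * P = l1 * l2 * l3 by
      rw [← e1, ← e2, ← e3, hP]; ring, show n 0 ^ 2 * Q = l1 * l2 * l3 by
      rw [← f1, ← f2, ← f3, hQ]; ring])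
  · exact key 1 (by rw [show m 1 ^ 2 * P = l1 * l4 * l5 by
      rw [← e1, ← e4, ← e5, hP]; ring, show n 1 ^ 2 * Q = l1 * l4 * l5 by
      rw [← f1, ← f4, ← f5, hQ]; ring])
  · exact key 2 (by rw [show m 2 ^ 2 * P = l1 * l6 * l7 by
      rw [← e1, ← e6, ← e7, hP]; ring, show n 2 ^ 2 * Q = l1 * l6 * l7 by
      rw [← f1, ← f6, ← f7, hQ]; ring])
  · exact key 3 (by rw [show m 3 ^ 2 * P = l2 * l4 * l6 by
      rw [← e2, ← e4, ← e6, hP]; ring, show n 3 ^ 2 * Q = l2 * l4 * l6 by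
      rw [← f2, ← f4, ← f6, hQ]; ring])
  · exact key 4 (by rw [show m 4 ^ 2 * P = l2 * l5 * l7 by
      rw [← e2, ← e5, ← e7, hP]; ring, show n 4 ^ 2 * Q = l2 * l5 * l7 by
      rw [← f2, ← f5, ← f7, hQ]; ring])
  · exact key 5 (by rw [show m 5 ^ 2 * P = l3 * l4 * l7 by
      rw [← e3, ← e4, ← e7, hP]; ring, show n 5 ^ 2 * Q = l3 * l4 * l7 by
      rw [← f3, ← f4, ← f7, hQ]; ring])
  · exact key 6 (by rw [show m 6 ^ 2 * P = l3 * l5 * l6 by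
      rw [← e3, ← e5, ← e6, hP]; ring, show n 6 ^ 2 * Q = l3 * l5 * l6 by
      rw [← f3, ← f5, ← f6, hQ]; ring])

/-- For all positive `λ₁,…,λ₇` there exist unique positive `μ₁,…,μ₇` solving the seven
product equations; moreover any such solution satisfies `λ₁⋯λ₇ = (μ₁⋯μ₇)³`. -/
theorem statement1 (l1 l2 l3 l4 l5 l6 l7 : ℝ)
    (h1 : 0 < l1) (h2 : 0 < l2) (h3 : 0 < l3) (h4 : 0 < l4)
    (h5 : 0 < l5) (h6 : 0 < l6) (h7 : 0 < l7) :
    (∃! m : Fin 7 → ℝ, (∀ i, 0 < m i) ∧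
      m 0 * m 1 * m 2 = l1 ∧ m 0 * m 3 * m 4 = l2 ∧ m 0 * m 5 * m 6 = l3 ∧
      m 1 * m 3 * m 5 = l4 ∧ m 1 * m 4 * m 6 = l5 ∧ m 2 * m 3 * m 6 = l6 ∧
      m 2 * m 4 * m 5 = l7) ∧
    (∀ m : Fin 7 → ℝ, (∀ i, 0 < m i) →
      m 0 * m 1 * m 2 = l1 → m 0 * m 3 * m 4 = l2 → m 0 * m 5 * m 6 = l3 →
      m 1 * m 3 * m 5 = l4 → m 1 * m 4 * m 6 = l5 → m 2 * m 3 * m 6 = l6 →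
      m 2 * m 4 * m 5 = l7 →
      l1 * l2 * l3 * l4 * l5 * l6 * l7 =
        (m 0 * m 1 * m 2 * m 3 * m 4 * m 5 * m 6) ^ 3) := by
  set S := fanoSol l1 l2 l3 l4 l5 l6 l7 with hS
  have hpos : ∀ i, 0 < S i := by
    intro i
    fin_cases i
    · show (0:ℝ) < Real.exp ((Real.log l1 + Real.log l2 + Real.log l3 - ((Real.log l1 + Real.log l2 + Real.log l3 + Real.log l4 + Real.log l5 + Real.log l6 + Real.log l7) / 3)) / 2)
      exact Real.exp_pos _
    · show (0:ℝ) < Real.exp ((Real.log l1 + Real.log l4 + Real.log l5 - ((Real.log l1 + Real.log l2 + Real.log l3 + Real.log l4 + Real.log l5 + Real.log l6 + Real.log l7) / 3)) / 2)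
      exact Real.exp_pos _
    · show (0:ℝ) < Real.exp ((Real.log l1 + Real.log l6 + Real.log l7 - ((Real.log l1 + Real.log l2 + Real.log l3 + Real.log l4 + Real.log l5 + Real.log l6 + Real.log l7) / 3)) / 2)
      exact Real.exp_pos _
    · show (0:ℝ) < Real.exp ((Real.log l2 + Real.log l4 + Real.log l6 - ((Real.log l1 + Real.log l2 + Real.log l3 + Real.log l4 + Real.log l5 + Real.log l6 + Real.log l7) / 3)) / 2)
      exact Real.exp_pos _
    · show (0:ℝ) < Real.exp ((Real.log l2 + Real.log l5 + Real.log l7 - ((Real.log l1 + Real.log l2 + Real.log l3 + Real.log l4 + Real.log l5 + Real.log l6 + Real.log l7) / 3)) / 2)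
      exact Real.exp_pos _
    · show (0:ℝ) < Real.exp ((Real.log l3 + Real.log l4 + Real.log l7 - ((Real.log l1 + Real.log l2 + Real.log l3 + Real.log l4 + Real.log l5 + Real.log l6 + Real.log l7) / 3)) / 2)
      exact Real.exp_pos _
    · show (0:ℝ) < Real.exp ((Real.log l3 + Real.log l5 + Real.log l6 - ((Real.log l1 + Real.log l2 + Real.log l3 + Real.log l4 + Real.log l5 + Real.log l6 + Real.log l7) / 3)) / 2)
      exact Real.exp_pos _
  have hs1 : S 0 * S 1 * S 2 = l1 := by
    show Real.exp ((Real.log l1 + Real.log l2 + Real.log l3 - ((Real.log l1 + Real.log l2 + Real.log l3 + Real.log l4 + Real.log l5 + Real.log l6 + Real.log l7) / 3)) / 2) *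
      Real.exp ((Real.log l1 + Real.log l4 + Real.log l5 - ((Real.log l1 + Real.log l2 + Real.log l3 + Real.log l4 + Real.log l5 + Real.log l6 + Real.log l7) / 3)) / 2) *
      Real.exp ((Real.log l1 + Real.log l6 + Real.log l7 - ((Real.log l1 + Real.log l2 + Real.log l3 + Real.log l4 + Real.log l5 + Real.log l6 + Real.log l7) / 3)) / 2) = l1
    rw [← Real.exp_add, ← Real.exp_add]
    refine Eq.trans (congrArg Real.exp ?_) (Real.exp_log h1)
    ring
  have hs2 : S 0 * S 3 * S 4 = l2 := by
    show Real.exp ((Real.log l1 + Real.log l2 + Real.log l3 - ((Real.log l1 + Real.log l2 + Real.log l3 + Real.log l4 + Real.log l5 + Real.log l6 + Real.log l7) / 3)) / 2) *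
      Real.exp ((Real.log l2 + Real.log l4 + Real.log l6 - ((Real.log l1 + Real.log l2 + Real.log l3 + Real.log l4 + Real.log l5 + Real.log l6 + Real.log l7) / 3)) / 2) *
      Real.exp ((Real.log l2 + Real.log l5 + Real.log l7 - ((Real.log l1 + Real.log l2 + Real.log l3 + Real.log l4 + Real.log l5 + Real.log l6 + Real.log l7) / 3)) / 2) = l2
    rw [← Real.exp_add, ← Real.exp_add]
    refine Eq.trans (congrArg Real.exp ?_) (Real.exp_log h2)
    ring
  have hs3 : S 0 * S 5 * S 6 = l3 := by
    show Real.exp ((Real.log l1 + Real.log l2 + Real.log l3 - ((Real.log l1 + Real.log l2 + Real.log l3 + Real.log l4 + Real.log l5 + Real.log l6 + Real.log l7) / 3)) / 2) *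
      Real.exp ((Real.log l3 + Real.log l4 + Real.log l7 - ((Real.log l1 + Real.log l2 + Real.log l3 + Real.log l4 + Real.log l5 + Real.log l6 + Real.log l7) / 3)) / 2) *
      Real.exp ((Real.log l3 + Real.log l5 + Real.log l6 - ((Real.log l1 + Real.log l2 + Real.log l3 + Real.log l4 + Real.log l5 + Real.log l6 + Real.log l7) / 3)) / 2) = l3
    rw [← Real.exp_add, ← Real.exp_add]
    refine Eq.trans (congrArg Real.exp ?_) (Real.exp_log h3)
    ring
  have hs4 : S 1 * S 3 * S 5 = l4 := by
    show Real.exp ((Real.log l1 + Real.log l4 + Real.log l5 - ((Real.log l1 + Real.log l2 + Real.log l3 + Real.log l4 + Real.log l5 + Real.log l6 + Real.log l7) / 3)) / 2) *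
      Real.exp ((Real.log l2 + Real.log l4 + Real.log l6 - ((Real.log l1 + Real.log l2 + Real.log l3 + Real.log l4 + Real.log l5 + Real.log l6 + Real.log l7) / 3)) / 2) *
      Real.exp ((Real.log l3 + Real.log l4 + Real.log l7 - ((Real.log l1 + Real.log l2 + Real.log l3 + Real.log l4 + Real.log l5 + Real.log l6 + Real.log l7) / 3)) / 2) = l4
    rw [← Real.exp_add, ← Real.exp_add]
    refine Eq.trans (congrArg Real.exp ?_) (Real.exp_log h4)
    ring
  have hs5 : S 1 * S 4 * S 6 = l5 := by
    show Real.exp ((Real.log l1 + Real.log l4 + Real.log l5 - ((Real.log l1 + Real.log l2 + Real.log l3 + Real.log l4 + Real.log l5 + Real.log l6 + Real.log l7) / 3)) / 2) *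
      Real.exp ((Real.log l2 + Real.log l5 + Real.log l7 - ((Real.log l1 + Real.log l2 + Real.log l3 + Real.log l4 + Real.log l5 + Real.log l6 + Real.log l7) / 3)) / 2) *
      Real.exp ((Real.log l3 + Real.log l5 + Real.log l6 - ((Real.log l1 + Real.log l2 + Real.log l3 + Real.log l4 + Real.log l5 + Real.log l6 + Real.log l7) / 3)) / 2) = l5
    rw [← Real.exp_add, ← Real.exp_add]
    refine Eq.trans (congrArg Real.exp ?_) (Real.exp_log h5)
    ring
  have hs6 : S 2 * S 3 * S 6 = l6 := by
    show Real.exp ((Real.log l1 + Real.log l6 + Real.log l7 - ((Real.log l1 + Real.log l2 + Real.log l3 + Real.log l4 + Real.log l5 + Real.log l6 + Real.log l7) / 3)) / 2) *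
      Real.exp ((Real.log l2 + Real.log l4 + Real.log l6 - ((Real.log l1 + Real.log l2 + Real.log l3 + Real.log l4 + Real.log l5 + Real.log l6 + Real.log l7) / 3)) / 2) *
      Real.exp ((Real.log l3 + Real.log l5 + Real.log l6 - ((Real.log l1 + Real.log l2 + Real.log l3 + Real.log l4 + Real.log l5 + Real.log l6 + Real.log l7) / 3)) / 2) = l6
    rw [← Real.exp_add, ← Real.exp_add]
    refine Eq.trans (congrArg Real.exp ?_) (Real.exp_log h6)
    ring
  have hs7 : S 2 * S 4 * S 5 = l7 := by
    show Real.exp ((Real.log l1 + Real.log l6 + Real.log l7 - ((Real.log l1 + Real.log l2 + Real.log l3 + Real.log l4 + Real.log l5 + Real.log l6 + Real.log l7) / 3)) / 2) *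
      Real.exp ((Real.log l2 + Real.log l5 + Real.log l7 - ((Real.log l1 + Real.log l2 + Real.log l3 + Real.log l4 + Real.log l5 + Real.log l6 + Real.log l7) / 3)) / 2) *
      Real.exp ((Real.log l3 + Real.log l4 + Real.log l7 - ((Real.log l1 + Real.log l2 + Real.log l3 + Real.log l4 + Real.log l5 + Real.log l6 + Real.log l7) / 3)) / 2) = l7
    rw [← Real.exp_add, ← Real.exp_add]
    refine Eq.trans (congrArg Real.exp ?_) (Real.exp_log h7)
    ring
  constructor
  · exact ⟨S, ⟨hpos, hs1, hs2, hs3, hs4, hs5, hs6, hs7⟩,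
      fun n ⟨hn, f1, f2, f3, f4, f5, f6, f7⟩ =>
        fano_uniq l1 l2 l3 l4 l5 l6 l7 n S hn hpos f1 f2 f3 f4 f5 f6 f7
          hs1 hs2 hs3 hs4 hs5 hs6 hs7⟩
  · intro m hm e1 e2 e3 e4 e5 e6 e7
    rw [← e1, ← e2, ← e3, ← e4, ← e5, ← e6, ← e7]; ring
end

section
/- Let A be a 4-dimensional real vector space, let J : A → A be a linear map with J∘J = −id, let ω be a real alternating 2-form on A satisfying ω(Jv, Jw) = ω(v,w) for all v,w ∈ A and ω(v, Jv) > 0 for all v ≠ 0, and let Ω : A × A → ℂ be a nonzero ℝ-bilinear alternating map satisfying Ω(Jv, w) = i·Ω(v,w) for all v,w ∈ A. Then there exist a real number ν > 0 and a basis (e₁,e₂,e₃,e₄) of A with dual basis (f¹,f²,f³,f⁴) such that: (f¹+if²)(Jv) = i·(f¹+if²)(v) and (f³+if⁴)(Jv) = i·(f³+if⁴)(v) for all v ∈ A; ω = f¹∧f² + f³∧f⁴; Re Ω = ν⁻¹(f¹∧f³ − f²∧f⁴); and Im Ω = ν⁻¹(f¹∧f⁴ + f²∧f³). -/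
/-!
`g v w = ω v (J w)` is a `J`-invariant inner product, so a unit vector `a` and a unit vector `b`
`g`-orthogonal to `a` and `J a` give a `g`-orthonormal basis `(a, J a, b, J b)`, whose coordinate
functionals are `g (·, e j)`; in these coordinates `ω` takes the standard form. Viewing `A` as `ℂ²`
through `J`, a `(2,0)`-form is `Ω a b` times the complex determinant of the coordinates of `a` and
`b`. Replacing `b` by `z • b` with `z = conj (Ω a b) / ‖Ω a b‖` keeps the basis orthonormal and
makes `Ω a b = ‖Ω a b‖` real and positive; its inverse is `ν`.
-/

open Module Complex

theorem Module.Basis.coord_eq_flip {R M ι : Type*} [CommSemiring R] [AddCommMonoid M]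
    [Module R M] [DecidableEq ι] (e : Basis ι R M) (B : M →ₗ[R] M →ₗ[R] R)
    (he : ∀ i j, B (e i) (e j) = if i = j then 1 else 0) (j : ι) :
    e.coord j = B.flip (e j) :=
  e.ext fun i => by simp [he, Finsupp.single_apply]

namespace ComplexStructure

variable {A : Type*} [AddCommGroup A] [Module ℝ A] {J : A →ₗ[ℝ] A}

def complexSMul (J : A →ₗ[ℝ] A) (z : ℂ) (v : A) : A := z.re • v + z.im • J v

section HolomorphicForm

variable {Ω : A →ₗ[ℝ] A →ₗ[ℝ] ℂ}

theorem apply_J_right (hΩ : Ω.IsAlt) (hΩJ : ∀ v w, Ω (J v) w = I * Ω v w) (v w : A) :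
    Ω v (J w) = I * Ω v w := by
  rw [← hΩ.neg, hΩJ, ← hΩ.neg, mul_neg, neg_neg]

theorem apply_complexSMul_left (hΩJ : ∀ v w, Ω (J v) w = I * Ω v w) (z : ℂ) (v w : A) :
    Ω (complexSMul J z v) w = z * Ω v w := by
  simp only [complexSMul, map_add, map_smul, LinearMap.add_apply, LinearMap.smul_apply, hΩJ,
    real_smul]
  conv_rhs => rw [← z.re_add_im]
  ring

theorem apply_complexSMul_right (hΩ : Ω.IsAlt) (hΩJ : ∀ v w, Ω (J v) w = I * Ω v w)
    (z : ℂ) (v w : A) : Ω v (complexSMul J z w) = z * Ω v w := by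
  simp only [complexSMul, map_add, map_smul, apply_J_right hΩ hΩJ, real_smul]
  conv_rhs => rw [← z.re_add_im]
  ring

theorem apply_complexSMul_add_complexSMul (hΩ : Ω.IsAlt)
    (hΩJ : ∀ v w, Ω (J v) w = I * Ω v w) (x y x' y' : ℂ) (a b : A) :
    Ω (complexSMul J x a + complexSMul J y b) (complexSMul J x' a + complexSMul J y' b) =
      (x * y' - y * x') * Ω a b := by
  simp only [map_add, LinearMap.add_apply, apply_complexSMul_left hΩJ,
    apply_complexSMul_right hΩ hΩJ, hΩ.self_eq_zero, ← hΩ.neg b a]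
  ring

end HolomorphicForm

structure IsCompatible (J : A →ₗ[ℝ] A) (ω : A →ₗ[ℝ] A →ₗ[ℝ] ℝ) : Prop where
  apply_apply : ∀ v, J (J v) = -v
  isAlt : ω.IsAlt
  apply_J_J : ∀ v w, ω (J v) (J w) = ω v w

structure IsUnitaryFrame (J : A →ₗ[ℝ] A) (ω : A →ₗ[ℝ] A →ₗ[ℝ] ℝ) (a b : A) : Prop where
  apply_J_fst : ω a (J a) = 1
  apply_J_snd : ω b (J b) = 1
  apply_fst_snd : ω a b = 0
  apply_fst_J_snd : ω a (J b) = 0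

section Form

variable {ω : A →ₗ[ℝ] A →ₗ[ℝ] ℝ}

theorem IsCompatible.apply_J_left (h : IsCompatible J ω) (v w : A) :
    ω (J v) w = -ω v (J w) := by
  rw [← h.apply_J_J, h.apply_apply, map_neg, LinearMap.neg_apply]

theorem exists_smul_apply_J_smul_eq_one (hpos : ∀ v : A, v ≠ 0 → 0 < ω v (J v)) {v : A}
    (hv : v ≠ 0) : ∃ t : ℝ, ω (t • v) (J (t • v)) = 1 := by
  refine ⟨(√(ω v (J v)))⁻¹, ?_⟩
  have hsq := Real.sq_sqrt (hpos v hv).le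
  have hne : √(ω v (J v)) ≠ 0 := (Real.sqrt_pos.2 (hpos v hv)).ne'
  simp only [map_smul, LinearMap.smul_apply, smul_eq_mul]
  field_simp
  exact hsq.symm

theorem exists_ne_zero_apply_eq_zero_and_apply_J_eq_zero [FiniteDimensional ℝ A]
    (hA : 2 < finrank ℝ A) (a : A) : ∃ u ≠ 0, ω a u = 0 ∧ ω a (J u) = 0 := by
  have hker : LinearMap.ker ((ω a).prod (ω a ∘ₗ J)) ≠ ⊥ :=
    LinearMap.ker_ne_bot_of_finrank_lt (by simpa using hA)
  obtain ⟨u, hu, hu0⟩ := Submodule.exists_mem_ne_zero_of_ne_bot hker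
  simp only [LinearMap.mem_ker, LinearMap.prod_apply, Function.prod, Prod.mk_eq_zero,
    LinearMap.comp_apply] at hu
  exact ⟨u, hu0, hu⟩

theorem exists_isUnitaryFrame [FiniteDimensional ℝ A] (hpos : ∀ v : A, v ≠ 0 → 0 < ω v (J v))
    (hA : 2 < finrank ℝ A) : ∃ a b, IsUnitaryFrame J ω a b := by
  have : Nontrivial A := Module.nontrivial_of_finrank_pos (R := ℝ) (by omega)
  obtain ⟨v, hv⟩ := exists_ne (0 : A)
  obtain ⟨s, hs⟩ := exists_smul_apply_J_smul_eq_one hpos hv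
  obtain ⟨u, hu0, hu, huJ⟩ := exists_ne_zero_apply_eq_zero_and_apply_J_eq_zero hA (s • v)
  obtain ⟨t, ht⟩ := exists_smul_apply_J_smul_eq_one hpos hu0
  refine ⟨s • v, t • u, hs, ht, ?_, ?_⟩
  · rw [map_smul, hu, smul_zero]
  · rw [J.map_smul, (ω (s • v)).map_smul, huJ, smul_zero]

namespace IsUnitaryFrame

variable {a b : A}

theorem complexSMul_snd (h : IsCompatible J ω) (hF : IsUnitaryFrame J ω a b) {z : ℂ}
    (hz : ‖z‖ = 1) : IsUnitaryFrame J ω a (complexSMul J z b) := by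
  have hz' : z.re * z.re + z.im * z.im = 1 := by
    rw [← normSq_apply, ← Complex.sq_norm, hz, one_pow]
  refine ⟨hF.apply_J_fst, ?_, ?_, ?_⟩
  · simp only [complexSMul, map_add, map_smul, map_neg, LinearMap.add_apply,
      LinearMap.smul_apply, smul_eq_mul, h.apply_apply, h.apply_J_left,
      h.isAlt.self_eq_zero, hF.apply_J_snd]
    linear_combination hz'
  · simp [complexSMul, hF.apply_fst_snd, hF.apply_fst_J_snd]
  · simp [complexSMul, h.apply_apply, hF.apply_fst_snd, hF.apply_fst_J_snd]

theorem gram (h : IsCompatible J ω) (hF : IsUnitaryFrame J ω a b) (i j : Fin 4) :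
    ω (![a, J a, b, J b] i) (J (![a, J a, b, J b] j)) = if i = j then 1 else 0 := by
  have hba : ω b a = 0 := by rw [← h.isAlt.neg, hF.apply_fst_snd, neg_zero]
  have hbJa : ω b (J a) = 0 := by
    rw [← h.isAlt.neg, h.apply_J_left, neg_neg, hF.apply_fst_J_snd]
  fin_cases i <;> fin_cases j <;>
    simp [h.apply_apply, h.apply_J_left, h.isAlt.self_eq_zero, hF.apply_J_fst, hF.apply_J_snd,
      hF.apply_fst_snd, hF.apply_fst_J_snd, hba, hbJa]

theorem linearIndependent (h : IsCompatible J ω) (hF : IsUnitaryFrame J ω a b) :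
    LinearIndependent ℝ ![a, J a, b, J b] :=
  LinearMap.BilinForm.linearIndependent_of_iIsOrtho (B := ω.compl₂ J)
    (fun i j hij => by simpa [hij] using hF.gram h i j) (fun i => by simp [hF.gram h i i])

noncomputable def basis (h : IsCompatible J ω) (hF : IsUnitaryFrame J ω a b)
    (hdim : finrank ℝ A = 4) : Basis (Fin 4) ℝ A :=
  basisOfLinearIndependentOfCardEqFinrank (hF.linearIndependent h) (by simp [hdim])

variable (h : IsCompatible J ω) (hF : IsUnitaryFrame J ω a b) (hdim : finrank ℝ A = 4)

theorem coe_basis : ⇑(hF.basis h hdim) = ![a, J a, b, J b] :=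
  coe_basisOfLinearIndependentOfCardEqFinrank _ _

theorem coord_basis (j : Fin 4) (v : A) :
    (hF.basis h hdim).coord j v = ω v (J (![a, J a, b, J b] j)) := by
  rw [(hF.basis h hdim).coord_eq_flip (ω.compl₂ J) (by simpa [coe_basis] using hF.gram h),
    coe_basis]
  rfl

theorem complexSMul_add_complexSMul (v : A) :
    complexSMul J ⟨(hF.basis h hdim).coord 0 v, (hF.basis h hdim).coord 1 v⟩ a +
      complexSMul J ⟨(hF.basis h hdim).coord 2 v, (hF.basis h hdim).coord 3 v⟩ b = v := by
  conv_rhs => rw [← (hF.basis h hdim).sum_repr v]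
  simp [complexSMul, Fin.sum_univ_four, coe_basis, add_assoc]

theorem coord_basis_apply_J (v : A) :
    (hF.basis h hdim).coord 0 (J v) = -(hF.basis h hdim).coord 1 v ∧
      (hF.basis h hdim).coord 1 (J v) = (hF.basis h hdim).coord 0 v ∧
      (hF.basis h hdim).coord 2 (J v) = -(hF.basis h hdim).coord 3 v ∧
      (hF.basis h hdim).coord 3 (J v) = (hF.basis h hdim).coord 2 v := by
  simp only [coord_basis]
  simp [h.apply_J_left, h.apply_apply]

theorem apply_eq_coord_basis (v w : A) :
    ω v w = ((hF.basis h hdim).coord 0 v * (hF.basis h hdim).coord 1 w -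
        (hF.basis h hdim).coord 0 w * (hF.basis h hdim).coord 1 v) +
      ((hF.basis h hdim).coord 2 v * (hF.basis h hdim).coord 3 w -
        (hF.basis h hdim).coord 2 w * (hF.basis h hdim).coord 3 v) := by
  conv_lhs => rw [← hF.complexSMul_add_complexSMul h hdim w]
  simp only [coord_basis, complexSMul, Matrix.cons_val, h.apply_apply, map_add, map_smul,
    map_neg, smul_eq_mul]
  ring

theorem apply_eq_mul {Ω : A →ₗ[ℝ] A →ₗ[ℝ] ℂ} (hΩ : Ω.IsAlt)
    (hΩJ : ∀ v w, Ω (J v) w = I * Ω v w) (v w : A) :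
    Ω v w = (⟨(hF.basis h hdim).coord 0 v, (hF.basis h hdim).coord 1 v⟩ *
          ⟨(hF.basis h hdim).coord 2 w, (hF.basis h hdim).coord 3 w⟩ -
        ⟨(hF.basis h hdim).coord 2 v, (hF.basis h hdim).coord 3 v⟩ *
          ⟨(hF.basis h hdim).coord 0 w, (hF.basis h hdim).coord 1 w⟩) * Ω a b := by
  conv_lhs => rw [← hF.complexSMul_add_complexSMul h hdim v,
    ← hF.complexSMul_add_complexSMul h hdim w]
  exact apply_complexSMul_add_complexSMul hΩ hΩJ _ _ _ _ a b

end IsUnitaryFrame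

end Form

end ComplexStructure

open ComplexStructure

/-- Normal form for an `SU(2)`-structure on a 4-dimensional real vector space:
given a complex structure `J`, a real positive `(1,1)`-form `ω` and a nonzero complex
`(2,0)`-form `Ω`, there exist `ν > 0` and a basis `(e₁,…,e₄)` with dual basis
`(f¹,…,f⁴)` such that `f¹+if²` and `f³+if⁴` are `(1,0)`-forms,
`ω = f¹∧f² + f³∧f⁴`, `Re Ω = ν⁻¹(f¹∧f³ − f²∧f⁴)` and `Im Ω = ν⁻¹(f¹∧f⁴ + f²∧f³)`. -/
theorem statement4
    (A : Type*) [AddCommGroup A] [Module ℝ A] [FiniteDimensional ℝ A]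
    (hdim : Module.finrank ℝ A = 4)
    (J : A →ₗ[ℝ] A) (hJ : J ∘ₗ J = -LinearMap.id)
    (ω : A →ₗ[ℝ] A →ₗ[ℝ] ℝ)
    (hω_alt : ∀ v, ω v v = 0)
    (hω_J : ∀ v w, ω (J v) (J w) = ω v w)
    (hω_pos : ∀ v : A, v ≠ 0 → 0 < ω v (J v))
    (Ω : A →ₗ[ℝ] A →ₗ[ℝ] ℂ)
    (hΩ_alt : ∀ v, Ω v v = 0)
    (hΩ_ne : Ω ≠ 0)
    (hΩ_J : ∀ v w, Ω (J v) w = Complex.I * Ω v w) :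
    ∃ ν : ℝ, 0 < ν ∧ ∃ e : Module.Basis (Fin 4) ℝ A,
      (∀ v : A, ((e.coord 0 (J v) : ℂ) + Complex.I * (e.coord 1 (J v) : ℂ)) =
          Complex.I * ((e.coord 0 v : ℂ) + Complex.I * (e.coord 1 v : ℂ))) ∧
      (∀ v : A, ((e.coord 2 (J v) : ℂ) + Complex.I * (e.coord 3 (J v) : ℂ)) =
          Complex.I * ((e.coord 2 v : ℂ) + Complex.I * (e.coord 3 v : ℂ))) ∧
      (∀ v w : A, ω v w =
          (e.coord 0 v * e.coord 1 w - e.coord 0 w * e.coord 1 v) +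
          (e.coord 2 v * e.coord 3 w - e.coord 2 w * e.coord 3 v)) ∧
      (∀ v w : A, (Ω v w).re = ν⁻¹ *
          ((e.coord 0 v * e.coord 2 w - e.coord 0 w * e.coord 2 v) -
           (e.coord 1 v * e.coord 3 w - e.coord 1 w * e.coord 3 v))) ∧
      (∀ v w : A, (Ω v w).im = ν⁻¹ *
          ((e.coord 0 v * e.coord 3 w - e.coord 0 w * e.coord 3 v) +
           (e.coord 1 v * e.coord 2 w - e.coord 1 w * e.coord 2 v))) := by
  have h : IsCompatible J ω :=
    ⟨fun v => by simpa using LinearMap.congr_fun hJ v, hω_alt, hω_J⟩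
  obtain ⟨a, b₀, hF₀⟩ := exists_isUnitaryFrame hω_pos (J := J) (by omega)
  set c := Ω a b₀ with hc_def
  have hc : c ≠ 0 := fun hc => hΩ_ne <| LinearMap.ext₂ fun v w => by
    rw [hF₀.apply_eq_mul h hdim hΩ_alt hΩ_J, ← hc_def, hc, mul_zero,
      LinearMap.zero_apply, LinearMap.zero_apply]
  have hz : ‖(starRingEnd ℂ c / ‖c‖)‖ = 1 := by simp [norm_ne_zero_iff.2 hc]
  have hF := hF₀.complexSMul_snd h hz
  have hΩab : Ω a (complexSMul J (starRingEnd ℂ c / ‖c‖) b₀) = ‖c‖ := by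
    rw [apply_complexSMul_right hΩ_alt hΩ_J, div_mul_eq_mul_div, conj_mul', sq,
      mul_div_assoc, div_self (by exact_mod_cast norm_ne_zero_iff.2 hc), mul_one]
  set e := hF.basis h hdim
  refine ⟨‖c‖⁻¹, by positivity, e, fun v => ?_, fun v => ?_, hF.apply_eq_coord_basis h hdim,
    fun v w => ?_, fun v w => ?_⟩
  · obtain ⟨h0, h1, -, -⟩ := hF.coord_basis_apply_J h hdim v
    rw [h0, h1]; push_cast
    linear_combination (-(e.coord 1 v : ℂ)) * Complex.I_sq
  · obtain ⟨-, -, h2, h3⟩ := hF.coord_basis_apply_J h hdim v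
    rw [h2, h3]; push_cast
    linear_combination (-(e.coord 3 v : ℂ)) * Complex.I_sq
  · rw [hF.apply_eq_mul h hdim hΩ_alt hΩ_J, hΩab, inv_inv]
    simp only [mul_re, sub_re, sub_im, mul_im, ofReal_re, ofReal_im]
    ring
  · rw [hF.apply_eq_mul h hdim hΩ_alt hΩ_J, hΩab, inv_inv]
    simp only [mul_re, sub_re, sub_im, mul_im, ofReal_re, ofReal_im]
    ring
end

section
/- Let λ ≥ 0 be a real number and let I ⊆ {1,…,7}. Define coefficients c_i = 1 + λ for i ∈ I and c_i = 1 for i ∉ I. Then there exists a linear automorphism g of ℝ⁷ with determinant det g = (1+λ)^{|I|/3} such that c₁φ₁ + c₂φ₂ + c₃φ₃ + c₄φ₄ + c₅φ₅ + c₆φ₆ + c₇φ₇ = φ₀ ∘ g. -/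
open Matrix

lemma theta_diag (d : Fin 7 → ℝ) (i j k : Fin 7) (v₁ v₂ v₃ : Fin 7 → ℝ) :
    theta i j k (fun n => d n * v₁ n) (fun n => d n * v₂ n) (fun n => d n * v₃ n) =
      d i * d j * d k * theta i j k v₁ v₂ v₃ := by
  simp [theta, Matrix.det_fin_three]
  ring

/-- For `λ ≥ 0` and `I ⊆ {1,…,7}`, setting `cᵢ = 1+λ` for `i ∈ I` and `cᵢ = 1` otherwise,
there is a linear automorphism `g` of `ℝ⁷` with `det g = (1+λ)^{|I|/3}` such that
`∑ cᵢ φᵢ = φ₀ ∘ g`. -/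
theorem statement6 (l : ℝ) (hl : 0 ≤ l) (I : Finset (Fin 7)) :
    ∃ g : (Fin 7 → ℝ) ≃ₗ[ℝ] (Fin 7 → ℝ),
      LinearMap.det (g.toLinearMap) = (1 + l) ^ ((I.card : ℝ) / 3) ∧
      ∀ v₁ v₂ v₃ : Fin 7 → ℝ,
        (if (0 : Fin 7) ∈ I then 1 + l else 1) * phi1 v₁ v₂ v₃ +
        (if (1 : Fin 7) ∈ I then 1 + l else 1) * phi2 v₁ v₂ v₃ +
        (if (2 : Fin 7) ∈ I then 1 + l else 1) * phi3 v₁ v₂ v₃ +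
        (if (3 : Fin 7) ∈ I then 1 + l else 1) * phi4 v₁ v₂ v₃ +
        (if (4 : Fin 7) ∈ I then 1 + l else 1) * phi5 v₁ v₂ v₃ +
        (if (5 : Fin 7) ∈ I then 1 + l else 1) * phi6 v₁ v₂ v₃ +
        (if (6 : Fin 7) ∈ I then 1 + l else 1) * phi7 v₁ v₂ v₃ =
          phi0 (g v₁) (g v₂) (g v₃) := by
  classical
  have hLpos : (0:ℝ) < 1 + l := by linarith
  -- indicator function
  set t : Fin 7 → ℝ := fun i => if i ∈ I then 1 else 0 with ht
  -- exponents
  set e : Fin 7 → ℝ := ![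
    (t 0 + t 1 + t 2) / 2 - (t 0 + t 1 + t 2 + t 3 + t 4 + t 5 + t 6) / 6,
    (t 0 + t 3 + t 4) / 2 - (t 0 + t 1 + t 2 + t 3 + t 4 + t 5 + t 6) / 6,
    (t 0 + t 5 + t 6) / 2 - (t 0 + t 1 + t 2 + t 3 + t 4 + t 5 + t 6) / 6,
    (t 1 + t 3 + t 5) / 2 - (t 0 + t 1 + t 2 + t 3 + t 4 + t 5 + t 6) / 6,
    (t 1 + t 4 + t 6) / 2 - (t 0 + t 1 + t 2 + t 3 + t 4 + t 5 + t 6) / 6,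
    (t 2 + t 3 + t 6) / 2 - (t 0 + t 1 + t 2 + t 3 + t 4 + t 5 + t 6) / 6,
    (t 2 + t 4 + t 5) / 2 - (t 0 + t 1 + t 2 + t 3 + t 4 + t 5 + t 6) / 6] with he
  set d : Fin 7 → ℝ := fun i => (1 + l) ^ (e i) with hd
  have hdpos : ∀ i, 0 < d i := fun i => Real.rpow_pos_of_pos hLpos _
  have hdne : ∀ i, d i ≠ 0 := fun i => (hdpos i).ne'
  -- (1+l)^(t m) = c m
  have he0 : e 0 = (t 0 + t 1 + t 2) / 2 - (t 0 + t 1 + t 2 + t 3 + t 4 + t 5 + t 6) / 6 := rfl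
  have he1 : e 1 = (t 0 + t 3 + t 4) / 2 - (t 0 + t 1 + t 2 + t 3 + t 4 + t 5 + t 6) / 6 := rfl
  have he2 : e 2 = (t 0 + t 5 + t 6) / 2 - (t 0 + t 1 + t 2 + t 3 + t 4 + t 5 + t 6) / 6 := rfl
  have he3 : e 3 = (t 1 + t 3 + t 5) / 2 - (t 0 + t 1 + t 2 + t 3 + t 4 + t 5 + t 6) / 6 := rfl
  have he4 : e 4 = (t 1 + t 4 + t 6) / 2 - (t 0 + t 1 + t 2 + t 3 + t 4 + t 5 + t 6) / 6 := rfl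
  have he5 : e 5 = (t 2 + t 3 + t 6) / 2 - (t 0 + t 1 + t 2 + t 3 + t 4 + t 5 + t 6) / 6 := rfl
  have he6 : e 6 = (t 2 + t 4 + t 5) / 2 - (t 0 + t 1 + t 2 + t 3 + t 4 + t 5 + t 6) / 6 := rfl
  have hpow : ∀ m : Fin 7, (1 + l) ^ (t m) = (if m ∈ I then 1 + l else 1) := by
    intro m
    by_cases hm : m ∈ I <;> simp [ht, hm]
  -- key: products along Fano lines
  have key : ∀ i j k m : Fin 7, e i + e j + e k = t m →
      d i * d j * d k = (if m ∈ I then 1 + l else 1) := by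
    intro i j k m h
    rw [hd]
    rw [← Real.rpow_add hLpos, ← Real.rpow_add hLpos, h, hpow]
  have h0 : d 0 * d 1 * d 2 = (if (0 : Fin 7) ∈ I then 1 + l else 1) := by
    apply key; rw [he0, he1, he2]; ring
  have h1 : d 0 * d 3 * d 4 = (if (1 : Fin 7) ∈ I then 1 + l else 1) := by
    apply key; rw [he0, he3, he4]; ring
  have h2 : d 0 * d 5 * d 6 = (if (2 : Fin 7) ∈ I then 1 + l else 1) := by
    apply key; rw [he0, he5, he6]; ring
  have h3 : d 1 * d 3 * d 5 = (if (3 : Fin 7) ∈ I then 1 + l else 1) := by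
    apply key; rw [he1, he3, he5]; ring
  have h4 : d 1 * d 4 * d 6 = (if (4 : Fin 7) ∈ I then 1 + l else 1) := by
    apply key; rw [he1, he4, he6]; ring
  have h5 : d 2 * d 3 * d 6 = (if (5 : Fin 7) ∈ I then 1 + l else 1) := by
    apply key; rw [he2, he3, he6]; ring
  have h6 : d 2 * d 4 * d 5 = (if (6 : Fin 7) ∈ I then 1 + l else 1) := by
    apply key; rw [he2, he4, he5]; ring
  -- the diagonal automorphism
  refine ⟨LinearEquiv.piCongrRight (fun i => LinearEquiv.smulOfNeZero ℝ ℝ (d i) (hdne i)),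
    ?_, ?_⟩
  · -- determinant
    rw [← LinearMap.det_toMatrix' ]
    have hmat : LinearMap.toMatrix'
        ((LinearEquiv.piCongrRight
          (fun i => LinearEquiv.smulOfNeZero ℝ ℝ (d i) (hdne i))).toLinearMap) =
        Matrix.diagonal d := by
      ext i j
      simp [LinearMap.toMatrix'_apply, LinearEquiv.piCongrRight, Matrix.diagonal,
        Pi.single_apply]
    rw [hmat, Matrix.det_diagonal]
    have hsum : e 0 + e 1 + e 2 + e 3 + e 4 + e 5 + e 6 = (I.card : ℝ) / 3 := by
      have hS : t 0 + t 1 + t 2 + t 3 + t 4 + t 5 + t 6 = (I.card : ℝ) := by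
        have : (I.card : ℝ) = ∑ i : Fin 7, (if i ∈ I then (1:ℝ) else 0) := by
          rw [Finset.sum_ite_mem, Finset.univ_inter]
          simp
        rw [this, Fin.sum_univ_seven]
      rw [← hS, he0, he1, he2, he3, he4, he5, he6]
      ring
    rw [Fin.prod_univ_seven]
    simp only [hd]
    rw [← Real.rpow_add hLpos, ← Real.rpow_add hLpos, ← Real.rpow_add hLpos,
      ← Real.rpow_add hLpos, ← Real.rpow_add hLpos, ← Real.rpow_add hLpos, hsum]
  · intro v₁ v₂ v₃
    have hgv : ∀ v : Fin 7 → ℝ,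
        (LinearEquiv.piCongrRight
          (fun i => LinearEquiv.smulOfNeZero ℝ ℝ (d i) (hdne i))) v =
          fun n => d n * v n := fun v => rfl
    simp only [phi0, phi1, phi2, phi3, phi4, phi5, phi6, phi7, hgv, theta_diag]
    rw [h0, h1, h2, h3, h4, h5, h6]
    ring
end
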